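/- Let A = ℂⁿ and 𝒜 an admissible Banach ℂⁿ-valued function algebra on X. If ℳ is an ideal of 𝒜 such that for every coordinate projection πᵢ : ℂⁿ → ℂ there exists fᵢ ∈ ℳ with πᵢ∘fᵢ = 1, then ℳ = 𝒜; consequently every maximal ideal ℳ of 𝒜 satisfies πᵢ[ℳ] ≠ 𝔄 for some i. -/
import Mathlib


open WeakDual

variable {X : Type*} [TopologicalSpace X] [CompactSpace X] [T2Space X] [Nonempty X]
variable {A : Type*} [NormedCommRing A] [NormedAlgebra ℂ A] [CompleteSpace A] [Nontrivial A]
variable {B : Type*} [NormedCommRing B] [NormedAlgebra ℂ B] [CompleteSpace B]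

/-- The embedding of scalar-valued continuous functions into `A`-valued ones,
`g ↦ g·𝟏`. -/
noncomputable def scalHom (X A : Type*) [TopologicalSpace X] [NormedCommRing A]
    [NormedAlgebra ℂ A] : C(X, ℂ) →ₐ[ℂ] C(X, A) :=
  AlgHom.compLeftContinuous ℂ (Algebra.ofId ℂ A) (continuous_algebraMap ℂ A)

/-- The scalar subalgebra `𝔄 = 𝒜 ∩ C(X)`, realized inside `C(X, ℂ)`: those scalar
functions `g` with `g·𝟏 ∈ 𝒜`. -/
noncomputable def scalarSub (ι : B →ₐ[ℂ] C(X, A)) : Subalgebra ℂ C(X, ℂ) :=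
  Subalgebra.comap (scalHom X A) (AlgHom.range ι)

/-- For A = ℂⁿ and an admissible Banach ℂⁿ-valued function algebra 𝒜: if an ideal ℳ
contains, for each coordinate projection πᵢ, an element fᵢ with πᵢ∘fᵢ = 1, then ℳ = 𝒜;
consequently every maximal ideal ℳ satisfies πᵢ[ℳ] ≠ 𝔄 for some i. -/
theorem stmt19 {n : ℕ} (hn : 0 < n) {B : Type*}
    [NormedCommRing B] [NormedAlgebra ℂ B] [CompleteSpace B]
    (ι : B →ₐ[ℂ] C(X, Fin n → ℂ)) (hinj : Function.Injective ι)
    (κ : (Fin n → ℂ) →ₐ[ℂ] B) (hκ : ∀ a : Fin n → ℂ, ι (κ a) = ContinuousMap.const X a)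
    (hκnorm : ∃ c₁ > (0:ℝ), ∃ c₂ > (0:ℝ), ∀ a : Fin n → ℂ,
      c₁ * ‖a‖ ≤ ‖κ a‖ ∧ ‖κ a‖ ≤ c₂ * ‖a‖)
    (hdom : ∀ f : B, ‖ι f‖ ≤ ‖f‖)
    (hsep : ∀ x y : X, x ≠ y → ∀ M : Ideal (Fin n → ℂ), M.IsMaximal →
      ∃ f : B, ι f x - ι f y ∉ M)
    (hadm : ∀ (f : B) (φ : (Fin n → ℂ) →ₐ[ℂ] ℂ), ∃ g : B,
      ∀ x : X, ι g x = algebraMap ℂ (Fin n → ℂ) (φ (ι f x))) :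
    (∀ ℳ : Ideal B, (∀ i : Fin n, ∃ f ∈ ℳ, ∀ x : X, ι f x i = 1) → ℳ = ⊤) ∧
    (∀ ℳ : Ideal B, ℳ.IsMaximal → ∃ i : Fin n,
      ¬ ∀ g₀ : ↥(scalarSub ι), ∃ f ∈ ℳ, ∀ x : X, (g₀ : C(X, ℂ)) x = ι f x i) := by
  have part1 : ∀ ℳ : Ideal B, (∀ i : Fin n, ∃ f ∈ ℳ, ∀ x : X, ι f x i = 1) → ℳ = ⊤ := by
    intro ℳ h
    choose f hfm hf using h
    rw [Ideal.eq_top_iff_one]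
    have key : (∑ i, κ (Pi.single i 1) * f i) = 1 := by
      apply hinj
      ext x j
      simp only [map_sum, map_mul, hκ, map_one, ContinuousMap.sum_apply,
        ContinuousMap.mul_apply, ContinuousMap.const_apply, ContinuousMap.one_apply,
        Pi.mul_apply, Pi.one_apply, Finset.sum_apply]
      rw [Finset.sum_eq_single j]
      · rw [Pi.single_eq_same, one_mul, hf j x]
      · intro i _ hij
        rw [Pi.single_eq_of_ne (Ne.symm hij), zero_mul]
      · exact fun h => absurd (Finset.mem_univ j) h
    rw [← key]
    exact Ideal.sum_mem _ fun i _ => Ideal.mul_mem_left _ _ (hfm i)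
  refine ⟨part1, ?_⟩
  intro ℳ hM
  by_contra hcon
  push_neg at hcon
  apply hM.ne_top
  apply part1 ℳ
  intro i
  obtain ⟨g, hfm, hg⟩ := hcon i ⟨1, one_mem _⟩
  exact ⟨g, hfm, fun x => by simpa using (hg x).symm⟩
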